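/- arXiv:2504.00932 — 4 statements merged into one kernel-verified Lean document; each statement's English description precedes it below -/
import Mathlib

section
/- If a graph G contains an r-shallow minor model of the complete graph K_h, then the (4r+1)-strong colouring number of G is at least h-1. -/
open SimpleGraph

/-- `u` is strongly `r`-reachable from `v` with respect to the vertex ordering induced by
the injection `ι : V → ℕ`: `ι u ≤ ι v` and there is a `v`–`u` path of length at most `r`
in which `u` is the only vertex smaller than `v`. -/
def StronglyReachable {V : Type} (G : SimpleGraph V) (ι : V → ℕ) (r : ℕ) (v u : V) : Prop :=
  ι u ≤ ι v ∧ ∃ p : G.Walk v u, p.IsPath ∧ p.length ≤ r ∧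
    ∀ w ∈ p.support, ι w < ι v → w = u

/-- `φ` is an `r`-shallow minor model of the complete graph `K_h` in `G`: each bag induces
a subgraph with a rooted spanning tree of height at most `r` (every vertex of the bag is
joined to the root by a walk of length at most `r` inside the bag), the bags are pairwise
disjoint, and between any two bags there is an edge of `G`. -/
def IsShallowKModel {V : Type} (G : SimpleGraph V) (r h : ℕ) (φ : Fin h → Set V) : Prop :=
  (∀ x : Fin h, ∃ root ∈ φ x, ∀ u ∈ φ x,
      ∃ p : G.Walk root u, p.length ≤ r ∧ ∀ w ∈ p.support, w ∈ φ x) ∧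
  (∀ x y : Fin h, x ≠ y → Disjoint (φ x) (φ y)) ∧
  (∀ x y : Fin h, x ≠ y → ∃ u ∈ φ x, ∃ w ∈ φ y, G.Adj u w)

/-!
Let `m x` be the `ι`-least vertex of the bag `φ x`, and let `v = m x₀` be the largest of these
minima. For every other bag `y`, walking from `v` to its root, across to the neighbouring bag
`φ y`, and on to `m y` takes at most `r + r + 1 + r + r` steps and stays inside `φ x₀ ∪ φ y`.
Since `ι (m y) < ι v`, the walk has a first vertex below `v`; it cannot lie in `φ x₀`, whose
vertices are all at least `v`, so it lies in `φ y` and is strongly `(4r+1)`-reachable from `v`.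
The bags are disjoint, so this gives `h - 1` distinct strongly reachable vertices.
-/

namespace SimpleGraph.Walk

variable {V : Type} {G : SimpleGraph V}

lemma exists_prefix_to_first {P : V → Prop} {s t : V} (W : G.Walk s t) (ht : P t) :
    ∃ u ∈ W.support, P u ∧
      ∃ p : G.Walk s u, p.length ≤ W.length ∧ ∀ w ∈ p.support, P w → w = u := by
  induction W with
  | nil => exact ⟨_, by simp, ht, nil, le_rfl, by simp⟩
  | @cons s _ _ hadj W ih =>
    by_cases hs : P s
    · exact ⟨s, by simp, hs, nil, by simp, by simp⟩
    · obtain ⟨u, hu, hPu, p, hlen, hfirst⟩ := ih ht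
      refine ⟨u, by simp [hu], hPu, cons hadj p, by simpa using hlen, ?_⟩
      intro w hw hPw
      rw [support_cons, List.mem_cons] at hw
      rcases hw with rfl | hw
      · exact absurd hPw hs
      · exact hfirst w hw hPw

end SimpleGraph.Walk

section StronglyReachable

variable {V : Type} {G : SimpleGraph V} {ι : V → ℕ} {r : ℕ}

lemma exists_stronglyReachable_of_walk {v t : V} (W : G.Walk v t) (hW : W.length ≤ r)
    (ht : ι t < ι v) : ∃ u ∈ W.support, ι u < ι v ∧ StronglyReachable G ι r v u := by
  classical
  obtain ⟨u, hu, hlt, p, hlen, hfirst⟩ := W.exists_prefix_to_first (P := fun w => ι w < ι v) ht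
  refine ⟨u, hu, hlt, hlt.le, p.bypass, p.bypass_isPath,
    p.length_bypass_le_length.trans (hlen.trans hW), fun w hw => hfirst w ?_⟩
  exact p.support_bypass_subset_support hw

lemma finite_setOf_stronglyReachable (hι : Function.Injective ι) (v : V) :
    {u | StronglyReachable G ι r v u}.Finite :=
  ((Set.finite_Iic (ι v)).preimage hι.injOn).subset fun _ hu => hu.1

end StronglyReachable

lemma Set.ncard_le_of_pairwiseDisjoint_inter_nonempty {α β : Type*} {s : Set α} {A : α → Set β}
    {T : Set β} (hT : T.Finite) (hA : s.PairwiseDisjoint A) (hmeet : ∀ i ∈ s, (A i ∩ T).Nonempty) :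
    s.ncard ≤ T.ncard := by
  rcases s.eq_empty_or_nonempty with rfl | ⟨i, hi⟩
  · simp
  have : Nonempty β := ⟨(hmeet i hi).some⟩
  choose! f hfA hfT using hmeet
  refine Set.ncard_le_ncard_of_injOn f hfT (fun i hi j hj hij => ?_) hT
  by_contra hne
  exact (hA hi hj hne).ne_of_mem (hfA i hi) (hfA j hj) hij

namespace IsShallowKModel

variable {V : Type} {G : SimpleGraph V} {r h : ℕ} {φ : Fin h → Set V}

lemma exists_walk_within_bag (hφ : IsShallowKModel G r h φ) (x : Fin h) {a b : V}
    (ha : a ∈ φ x) (hb : b ∈ φ x) :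
    ∃ W : G.Walk a b, W.length ≤ 2 * r ∧ ∀ w ∈ W.support, w ∈ φ x := by
  obtain ⟨root, -, hroot⟩ := hφ.1 x
  obtain ⟨p, hp, hpφ⟩ := hroot a ha
  obtain ⟨q, hq, hqφ⟩ := hroot b hb
  refine ⟨p.reverse.append q, ?_, fun w hw => ?_⟩
  · simp only [Walk.length_append, Walk.length_reverse]
    omega
  rcases (Walk.mem_support_append_iff _ _).1 hw with hw | hw
  · exact hpφ w (by simpa using hw)
  · exact hqφ w hw

lemma exists_walk_between_bags (hφ : IsShallowKModel G r h φ) {x y : Fin h} (hxy : x ≠ y)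
    {a b : V} (ha : a ∈ φ x) (hb : b ∈ φ y) :
    ∃ W : G.Walk a b, W.length ≤ 4 * r + 1 ∧ ∀ w ∈ W.support, w ∈ φ x ∨ w ∈ φ y := by
  obtain ⟨a', ha', b', hb', hadj⟩ := hφ.2.2 x y hxy
  obtain ⟨p, hp, hpφ⟩ := hφ.exists_walk_within_bag x ha ha'
  obtain ⟨q, hq, hqφ⟩ := hφ.exists_walk_within_bag y hb' hb
  refine ⟨p.append (.cons hadj q), ?_, fun w hw => ?_⟩
  · simp only [Walk.length_append, Walk.length_cons]
    omega
  rcases (Walk.mem_support_append_iff _ _).1 hw with hw | hw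
  · exact .inl (hpφ w hw)
  · rw [Walk.support_cons, List.mem_cons] at hw
    rcases hw with rfl | hw
    · exact .inl ha'
    · exact .inr (hqφ w hw)

lemma exists_stronglyReachable_of_lt (hφ : IsShallowKModel G r h φ) {ι : V → ℕ} {x y : Fin h}
    {v t : V} (hv : v ∈ φ x) (hvmin : ∀ w ∈ φ x, ι v ≤ ι w) (ht : t ∈ φ y) (hlt : ι t < ι v) :
    ∃ u ∈ φ y, StronglyReachable G ι (4 * r + 1) v u := by
  have hxy : x ≠ y := by
    rintro rfl
    exact (hvmin t ht).not_gt hlt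
  obtain ⟨W, hW, hWφ⟩ := hφ.exists_walk_between_bags hxy hv ht
  obtain ⟨u, hu, hlt, hreach⟩ := exists_stronglyReachable_of_walk W hW hlt
  refine ⟨u, (hWφ u hu).resolve_left fun hux => ?_, hreach⟩
  exact (hvmin u hux).not_gt hlt

end IsShallowKModel

theorem stmt0_general {V : Type} (G : SimpleGraph V) (r h : ℕ) (hh : 1 ≤ h)
    (φ : Fin h → Set V) (hφ : IsShallowKModel G r h φ)
    (ι : V → ℕ) (hι : Function.Injective ι) :
    ∃ v : V, h - 1 ≤ {u | StronglyReachable G ι (4 * r + 1) v u}.ncard := by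
  have hne : ∀ x, (φ x).Nonempty := fun x => (hφ.1 x).imp fun _ hroot => hroot.1
  let m x := Function.argminOn ι (φ x) (hne x)
  have hm : ∀ x, m x ∈ φ x := fun x => Function.argminOn_mem ι (φ x) (hne x)
  have : Nonempty (Fin h) := ⟨⟨0, hh⟩⟩
  obtain ⟨x₀, hx₀⟩ := Finite.exists_max fun x => ι (m x)
  refine ⟨m x₀, ?_⟩
  have hreach : ∀ y ∈ ({x₀}ᶜ : Set (Fin h)),
      (φ y ∩ {u | StronglyReachable G ι (4 * r + 1) (m x₀) u}).Nonempty := by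
    intro y hy
    have hlt : ι (m y) < ι (m x₀) :=
      (hx₀ y).lt_of_ne (hι.ne ((hφ.2.1 y x₀ hy).ne_of_mem (hm y) (hm x₀)))
    exact hφ.exists_stronglyReachable_of_lt (hm x₀) (fun w hw => Function.argminOn_le ι _ hw)
      (hm y) hlt
  calc h - 1 = ({x₀}ᶜ : Set (Fin h)).ncard := by rw [Set.ncard_compl]; simp
    _ ≤ _ := Set.ncard_le_of_pairwiseDisjoint_inter_nonempty
        (finite_setOf_stronglyReachable hι _) (fun y _ z _ hyz => hφ.2.1 y z hyz) hreach

/-- If a graph `G` contains an `r`-shallow minor model of `K_h`, then every vertex ordering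
has `(4r+1)`-width at least `h - 1`; that is, `scol_{4r+1}(G) ≥ h - 1`. -/
theorem stmt0 {V : Type} [Fintype V] (G : SimpleGraph V) (r h : ℕ) (hh : 1 ≤ h)
    (φ : Fin h → Set V) (hφ : IsShallowKModel G r h φ)
    (ι : V → ℕ) (hι : Function.Injective ι) :
    ∃ v : V, h - 1 ≤ {u | StronglyReachable G ι (4 * r + 1) v u}.ncard :=
  stmt0_general G r h hh φ hφ ι hι
end

section
/- Let r, t ≥ 1 and let N = {S_1 ≺ S_2 ≺ ⋯ ≺ S_{t(r+1)}} be a linearly ordered set of t(r+1) vertices of a graph G such that for every vertex x ∈ V(G)\N, the neighbourhood of x in N is an interval with respect to the ordering. Suppose G − N contains t²(r+1) pairwise vertex-disjoint paths, each of length at most r, each with one end adjacent to S_1 and the other end adjacent to S_{t(r+1)}, and such that every vertex of N is adjacent to at least one vertex of each path. Then G contains K_{t,t} as a subgraph. -/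
/-!
Each path `P` has at most `r + 1` vertices and every one of the `t(r+1)` vertices of `N` has a
neighbour on `P`, so some vertex `x_P` of `P` sees at least `t` vertices of `N`; since its
neighbourhood in `N` is an interval, it contains `t` consecutive elements of `N`. There are at
most `tr + 1` possible starting points for such an interval and `t²(r+1)` paths, so `t` of these
intervals share a starting point, and the `t` vertices `x_P` (distinct, the paths being disjoint)
together with that common interval form a `K_{t,t}`.
-/

open Finset

theorem Finset.exists_card_eq_forall_eq_of_mul_le {α β : Type*} {s : Finset α}
    {T : Finset β} {f : α → β} {n : ℕ} (hf : ∀ a ∈ s, f a ∈ T) (hT : T.Nonempty)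
    (hn : #T * n ≤ #s) : ∃ b ∈ T, ∃ Q ⊆ s, #Q = n ∧ ∀ a ∈ Q, f a = b := by
  classical
  obtain ⟨b, hb, hfiber⟩ := exists_le_card_fiber_of_mul_le_card_of_maps_to hf hT hn
  obtain ⟨Q, hQ, hQcard⟩ := exists_subset_card_eq hfiber
  exact ⟨b, hb, Q, hQ.trans (filter_subset _ _), hQcard, fun a ha => (mem_filter.1 (hQ ha)).2⟩

theorem Finset.exists_Ico_subset_of_ordConnected {n t : ℕ} {F : Finset (Fin n)}
    (hF : (F : Set (Fin n)).OrdConnected) (hne : F.Nonempty) (ht : t ≤ #F) :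
    ∃ a, a + t ≤ n ∧ ∀ i : Fin n, ↑i ∈ Ico a (a + t) → i ∈ F := by
  set m := F.min' hne
  set M := F.max' hne
  have hsub : F ⊆ Icc m M := fun i hi => mem_Icc.2 ⟨F.min'_le i hi, F.le_max' i hi⟩
  have hlen : t ≤ (M : ℕ) + 1 - m := by
    calc t ≤ #F := ht
      _ ≤ #(Icc m M) := card_le_card hsub
      _ = (M : ℕ) + 1 - m := Fin.card_Icc m M
  refine ⟨m, by omega, fun i hi => ?_⟩
  rw [mem_Ico] at hi
  exact hF.out (F.min'_mem hne) (F.max'_mem hne) ⟨Fin.le_def.2 hi.1, Fin.le_def.2 (by omega)⟩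

namespace SimpleGraph

variable {V : Type*} (G : SimpleGraph V)

theorem Walk.card_support_toFinset_le [DecidableEq V] {u v : V} (p : G.Walk u v) :
    #p.support.toFinset ≤ p.length + 1 :=
  p.support.toFinset_card_le.trans_eq p.length_support

theorem exists_le_card_adj_of_forall_exists_adj [DecidableRel G.Adj] {ι : Type*} [Fintype ι]
    [Nonempty ι] (f : ι → V) {T : Finset V} {t : ℕ} (hT : #T * t ≤ Fintype.card ι)
    (hadj : ∀ i, ∃ z ∈ T, G.Adj (f i) z) : ∃ z ∈ T, t ≤ #{i | G.Adj z (f i)} := by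
  choose g hgT hg using hadj
  obtain ⟨z, hz, Q, -, hQcard, hQ⟩ := exists_card_eq_forall_eq_of_mul_le (s := univ) (f := g)
    (fun i _ => hgT i) ⟨_, hgT (Classical.arbitrary ι)⟩ hT
  refine ⟨z, hz, hQcard ▸ card_le_card fun i hi => mem_filter.2 ⟨mem_univ i, ?_⟩⟩
  exact hQ i hi ▸ (hg i).symm

theorem exists_adj_Ico_of_forall_exists_adj {n t : ℕ} [NeZero n] (S : Fin n → V)
    {T : Finset V} (hT : #T * t ≤ n) (ht : 0 < t)
    (hconv : ∀ z ∈ T, {i | G.Adj z (S i)}.OrdConnected)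
    (hadj : ∀ i, ∃ z ∈ T, G.Adj (S i) z) :
    ∃ z ∈ T, ∃ a, a + t ≤ n ∧ ∀ i : Fin n, ↑i ∈ Ico a (a + t) → G.Adj z (S i) := by
  classical
  obtain ⟨z, hz, hcard⟩ := G.exists_le_card_adj_of_forall_exists_adj S (by simpa using hT) hadj
  have hne : ({i | G.Adj z (S i)} : Finset (Fin n)).Nonempty := card_pos.1 (ht.trans_le hcard)
  obtain ⟨a, ha, hI⟩ := exists_Ico_subset_of_ordConnected (by simpa using hconv z hz) hne hcard
  exact ⟨z, hz, a, ha, fun i hi => (mem_filter.1 (hI i hi)).2⟩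

theorem exists_card_eq_disjoint_forall_adj {ι κ : Type*} {Q : Finset ι}
    {I : Finset κ} {x : ι → V} {y : κ → V} (hx : Set.InjOn x Q) (hy : Set.InjOn y I)
    (hadj : ∀ p ∈ Q, ∀ i ∈ I, G.Adj (x p) (y i)) :
    ∃ A B : Finset V, #A = #Q ∧ #B = #I ∧ Disjoint A B ∧ ∀ a ∈ A, ∀ b ∈ B, G.Adj a b := by
  classical
  have hAB : ∀ a ∈ Q.image x, ∀ b ∈ I.image y, G.Adj a b := by
    simp only [mem_image]
    rintro _ ⟨p, hp, rfl⟩ _ ⟨i, hi, rfl⟩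
    exact hadj p hp i hi
  refine ⟨Q.image x, I.image y, card_image_of_injOn hx, card_image_of_injOn hy, ?_, hAB⟩
  rw [Finset.disjoint_left]
  exact fun a ha hb => G.irrefl (hAB a ha a hb)

end SimpleGraph

theorem stmt3_general {V : Type} (G : SimpleGraph V) (r t : ℕ) (ht : 1 ≤ t)
    (S : Fin (t * (r + 1)) → V) (hS : Function.Injective S)
    (hInterval : ∀ x : V, (∀ i, x ≠ S i) → ∀ i j k : Fin (t * (r + 1)),
      i ≤ j → j ≤ k → G.Adj x (S i) → G.Adj x (S k) → G.Adj x (S j))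
    (u w : Fin (t ^ 2 * (r + 1)) → V)
    (P : ∀ p, G.Walk (u p) (w p))
    (hlen : ∀ p, (P p).length ≤ r)
    (havoid : ∀ p, ∀ z ∈ (P p).support, ∀ i, z ≠ S i)
    (hdisj : ∀ p q, p ≠ q → ∀ z ∈ (P p).support, z ∉ (P q).support)
    (hall : ∀ i, ∀ p, ∃ z ∈ (P p).support, G.Adj (S i) z) :
    ∃ A B : Finset V, A.card = t ∧ B.card = t ∧ Disjoint A B ∧
      ∀ a ∈ A, ∀ b ∈ B, G.Adj a b := by
  classical
  have : NeZero (t * (r + 1)) := ⟨by positivity⟩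
  have hsize (p) : #(P p).support.toFinset * t ≤ t * (r + 1) := by
    rw [mul_comm t]
    exact Nat.mul_le_mul_right t ((P p).card_support_toFinset_le.trans (Nat.succ_le_succ (hlen p)))
  have hconv (x : V) (hx : ∀ i, x ≠ S i) : {i | G.Adj x (S i)}.OrdConnected :=
    ⟨fun i hi k hk j hj => hInterval x hx i j k hj.1 hj.2 hi hk⟩
  choose x hx a ha hxa using fun p => G.exists_adj_Ico_of_forall_exists_adj S (hsize p) ht
    (fun z hz => hconv z (havoid p z (List.mem_toFinset.1 hz))) (fun i => by simpa using hall i p)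
  obtain ⟨a₀, ha₀, Q, -, hQcard, hQ⟩ := exists_card_eq_forall_eq_of_mul_le (s := univ)
    (T := range (t * r + 1)) (f := a)
    (fun p _ => mem_range.2 (by have := ha p; rw [mul_add] at this; omega))
    nonempty_range_add_one (by simp only [card_range, card_univ, Fintype.card_fin]; nlinarith)
  have hI : ∀ m ∈ Ico a₀ (a₀ + t), m < t * (r + 1) := fun m hm => by
    rw [mem_range] at ha₀; rw [mem_Ico] at hm; rw [mul_add]; omega
  have hxinj : Set.InjOn x Q := fun p _ q _ hpq => by
    by_contra hne
    exact hdisj p q hne (x p) (List.mem_toFinset.1 (hx p)) (hpq ▸ List.mem_toFinset.1 (hx q))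
  obtain ⟨A, B, hA, hB, hAB, hadj⟩ := G.exists_card_eq_disjoint_forall_adj hxinj
    hS.injOn fun p hp i hi => hxa p i (hQ p hp ▸ (mem_attachFin hI).1 hi)
  refine ⟨A, B, hA.trans hQcard, ?_, hAB, hadj⟩
  rw [hB, card_attachFin, Nat.card_Ico, Nat.add_sub_cancel_left]

/-- Lemma on nested spheres (abstract form).  `S` enumerates a linearly ordered set `N` of
`t(r+1)` vertices such that every vertex outside `N` has an interval of `N` as its
neighbourhood in `N`.  If `G - N` contains `t²(r+1)` pairwise vertex-disjoint paths, each of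
length at most `r`, each with one end adjacent to the minimal element `S_1` and the other
end adjacent to the maximal element `S_{t(r+1)}`, such that every vertex of `N` is adjacent
to at least one vertex of each path, then `G` contains `K_{t,t}` as a subgraph. -/
theorem stmt3 {V : Type} (G : SimpleGraph V) (r t : ℕ) (hr : 1 ≤ r) (ht : 1 ≤ t)
    (S : Fin (t * (r + 1)) → V) (hS : Function.Injective S)
    (hInterval : ∀ x : V, (∀ i, x ≠ S i) → ∀ i j k : Fin (t * (r + 1)),
      i ≤ j → j ≤ k → G.Adj x (S i) → G.Adj x (S k) → G.Adj x (S j))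
    (u w : Fin (t ^ 2 * (r + 1)) → V)
    (P : ∀ p, G.Walk (u p) (w p))
    (hpath : ∀ p, (P p).IsPath)
    (hlen : ∀ p, (P p).length ≤ r)
    (havoid : ∀ p, ∀ z ∈ (P p).support, ∀ i, z ≠ S i)
    (hdisj : ∀ p q, p ≠ q → ∀ z ∈ (P p).support, z ∉ (P q).support)
    (hfirst : ∀ p, G.Adj (u p) (S ⟨0, Nat.mul_pos ht (Nat.succ_pos r)⟩))
    (hlast : ∀ p, G.Adj (w p) (S ⟨t * (r + 1) - 1,
      Nat.sub_lt (Nat.mul_pos ht (Nat.succ_pos r)) Nat.one_pos⟩))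
    (hall : ∀ i, ∀ p, ∃ z ∈ (P p).support, G.Adj (S i) z) :
    ∃ A B : Finset V, A.card = t ∧ B.card = t ∧ Disjoint A B ∧
      ∀ a ∈ A, ∀ b ∈ B, G.Adj a b :=
  stmt3_general G r t ht S hS hInterval u w P hlen havoid hdisj hall
end

section
/- Let n ≥ 2 and let G be a finite triangle-free graph of minimum degree at least n such that G − N[y] is connected for every vertex y, where N[y] is the closed neighbourhood of y. Suppose G is the intersection graph of a family {S_v : v ∈ V(G)} of spheres (boundaries of balls) in ℝ^d. Fix v with S_v of minimum radius. Then among the spheres representing neighbours of v, there do not exist three spheres S_x, S_y, S_z with S_y contained in the interior of S_x and S_z contained in the interior of S_y. -/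
/-!
Let `S_y` be the middle sphere of the nested triple. The spheres of `x` and `z` avoid `S_y`
(triangle-freeness, since `x, y, z` are all neighbours of `v`), one lying outside and one inside
it. In dimension `≥ 2` spheres are connected, so the spheres of the connected graph
`G − N[y]` have a connected union joining the inside of `S_y` to its outside; it must meet
`S_y`, giving a neighbour of `y` in `G − N[y]`. In dimension `≤ 1` a sphere has at most two
points, while `S_v` meets `S_x`, `S_y`, `S_z` in three distinct points.
-/

open Metric Set

theorem IsPreconnected.inter_sphere_nonempty {X : Type*} [PseudoMetricSpace X] {A : Set X}
    (hA : IsPreconnected A) {c : X} {r : ℝ} (hin : (A ∩ ball c r).Nonempty)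
    (hout : (A ∩ (closedBall c r)ᶜ).Nonempty) : (A ∩ sphere c r).Nonempty := by
  by_contra hA_sphere
  have hsplit : A ⊆ ball c r ∪ (closedBall c r)ᶜ := fun a ha => by
    rcases lt_trichotomy (dist a c) r with h | h | h
    · exact Or.inl h
    · exact absurd ⟨a, ha, h⟩ hA_sphere
    · exact Or.inr (not_le.2 h)
  obtain ⟨a, ha, ha_out⟩ := hout
  exact ha_out <| ball_subset_closedBall <|
    hA.subset_left_of_subset_union isOpen_ball isClosed_closedBall.isOpen_compl
      (disjoint_compl_right_iff_subset.2 ball_subset_closedBall) hsplit hin ha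

theorem SimpleGraph.Preconnected.isPreconnected_iUnion {α X : Type*} [TopologicalSpace X]
    {G : SimpleGraph α} (hG : G.Preconnected) {K : α → Set X} (hK : ∀ i, IsPreconnected (K i))
    (hadj : ∀ i j, G.Adj i j → (K i ∩ K j).Nonempty) : IsPreconnected (⋃ i, K i) :=
  IsPreconnected.iUnion_of_reflTransGen hK fun i j =>
    Relation.ReflTransGen.mono hadj _ _ ((SimpleGraph.reachable_iff_reflTransGen i j).1 (hG i j))

theorem SimpleGraph.Preconnected.exists_inter_sphere_nonempty {ι X : Type*}
    [PseudoMetricSpace X] {G : SimpleGraph ι} {s : Set ι} (hs : (G.induce s).Preconnected)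
    {K : ι → Set X} (hK : ∀ i, IsPreconnected (K i))
    (hadj : ∀ i j, G.Adj i j → (K i ∩ K j).Nonempty) {x z : ι} (hx : x ∈ s) (hz : z ∈ s)
    {c : X} {r : ℝ} (hin : (K z ∩ Metric.ball c r).Nonempty)
    (hout : (K x ∩ (Metric.closedBall c r)ᶜ).Nonempty) :
    ∃ w ∈ s, (K w ∩ sphere c r).Nonempty := by
  have hU : IsPreconnected (⋃ w : s, K w) :=
    hs.isPreconnected_iUnion (fun w => hK w) fun i j h => hadj i j h
  obtain ⟨a, ha, ha_sphere⟩ := hU.inter_sphere_nonempty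
    (hin.mono (inter_subset_inter_left _ (subset_iUnion_of_subset ⟨z, hz⟩ subset_rfl)))
    (hout.mono (inter_subset_inter_left _ (subset_iUnion_of_subset ⟨x, hx⟩ subset_rfl)))
  obtain ⟨w, haw⟩ := mem_iUnion.1 ha
  exact ⟨w, w.2, a, haw, ha_sphere⟩

theorem EuclideanSpace.eq_or_eq_or_eq_of_mem_sphere {d : ℕ} (hd : d < 2)
    {c p q r : EuclideanSpace ℝ (Fin d)} {ρ : ℝ} (hp : p ∈ sphere c ρ) (hq : q ∈ sphere c ρ)
    (hr : r ∈ sphere c ρ) : p = q ∨ p = r ∨ q = r := by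
  interval_cases d
  · exact Or.inl (Subsingleton.elim p q)
  · have hcoord : ∀ a ∈ sphere c ρ, a 0 - c 0 = ρ ∨ a 0 - c 0 = -ρ := fun a ha => by
      rw [mem_sphere, EuclideanSpace.dist_eq, Fin.sum_univ_one, Real.sqrt_sq dist_nonneg,
        Real.dist_eq] at ha
      exact eq_or_eq_neg_of_abs_eq ha
    have hext : ∀ a b : EuclideanSpace ℝ (Fin 1), a 0 = b 0 → a = b := fun a b h =>
      PiLp.ext fun i => by rwa [Subsingleton.elim i 0]
    rcases hcoord p hp with hp | hp <;> rcases hcoord q hq with hq | hq <;>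
      rcases hcoord r hr with hr | hr <;>
      first
        | exact Or.inl (hext _ _ (by linarith))
        | exact Or.inr (Or.inl (hext _ _ (by linarith)))
        | exact Or.inr (Or.inr (hext _ _ (by linarith)))

theorem EuclideanSpace.one_lt_rank {d : ℕ} (hd : 2 ≤ d) :
    1 < Module.rank ℝ (EuclideanSpace ℝ (Fin d)) := by
  rw [← Module.finrank_eq_rank, finrank_euclideanSpace_fin]
  exact_mod_cast hd

theorem stmt10_general {d : ℕ} {ι : Type}
    (G : SimpleGraph ι)
    (c : ι → EuclideanSpace ℝ (Fin d)) (ρ : ι → ℝ)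
    (hrep : ∀ i j, G.Adj i j ↔ i ≠ j ∧
      (Metric.sphere (c i) (ρ i) ∩ Metric.sphere (c j) (ρ j)).Nonempty)
    (htri : G.CliqueFree 3)
    (hconn : ∀ y : ι, (G.induce {z : ι | z ≠ y ∧ ¬ G.Adj y z}).Connected)
    (v : ι) :
    ¬ ∃ x y z : ι, G.Adj v x ∧ G.Adj v y ∧ G.Adj v z ∧
      Metric.closedBall (c y) (ρ y) ⊆ Metric.ball (c x) (ρ x) ∧
      Metric.closedBall (c z) (ρ z) ⊆ Metric.ball (c y) (ρ y) := by
  rintro ⟨x, y, z, hvx, hvy, hvz, hyx, hzy⟩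
  obtain ⟨-, r, hrv, hry⟩ := (hrep v y).1 hvy
  obtain ⟨-, p, hpv, hpz⟩ := (hrep v z).1 hvz
  obtain ⟨-, q, hqv, hqx⟩ := (hrep v x).1 hvx
  have hp : p ∈ ball (c y) (ρ y) := hzy (sphere_subset_closedBall hpz)
  have hq : q ∉ closedBall (c y) (ρ y) := fun h =>
    disjoint_left.1 sphere_disjoint_ball hqx (hyx h)
  rcases lt_or_ge d 2 with hd | hd
  · rcases EuclideanSpace.eq_or_eq_or_eq_of_mem_sphere hd hpv hqv hrv with rfl | rfl | rfl
    · exact hq (ball_subset_closedBall hp)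
    · exact (mem_ball.1 hp).ne (mem_sphere.1 hry)
    · exact hq (sphere_subset_closedBall hry)
  · classical
    have hnot_adj : ∀ w, G.Adj v w → ¬ G.Adj y w := fun w hvw hyw =>
      htri {v, y, w} (SimpleGraph.is3Clique_triple_iff.2 ⟨hvy, hvw, hyw⟩)
    have hx : x ≠ y := by rintro rfl; exact hq (sphere_subset_closedBall hqx)
    have hz : z ≠ y := by rintro rfl; exact (mem_ball.1 hp).ne (mem_sphere.1 hpz)
    obtain ⟨w, ⟨hwy, hyw⟩, a, haw, hay⟩ :=
      (hconn y).preconnected.exists_inter_sphere_nonempty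
        (fun i => isPreconnected_sphere (EuclideanSpace.one_lt_rank hd) (c i) (ρ i))
        (fun i j h => ((hrep i j).1 h).2) ⟨hx, hnot_adj x hvx⟩ ⟨hz, hnot_adj z hvz⟩
        ⟨p, hpz, hp⟩ ⟨q, hqx, hq⟩
    exact hyw ((hrep y w).2 ⟨hwy.symm, a, hay, haw⟩)

/-- Let `n ≥ 2` and let `G` be a finite triangle-free graph of minimum degree at least `n`
such that `G − N[y]` is connected for every vertex `y`.  Suppose `G` is the intersection
graph of a family of spheres in `ℝ^d`, and let `v` have a sphere of minimum radius.  Then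
among the spheres of neighbours of `v`, there is no nested triple `S_x, S_y, S_z` with
`S_y` contained in the interior of `S_x` and `S_z` contained in the interior of `S_y`. -/
theorem stmt10 {d : ℕ} {ι : Type} [Fintype ι] [Nonempty ι] (n : ℕ) (hn : 2 ≤ n)
    (G : SimpleGraph ι) [DecidableRel G.Adj]
    (c : ι → EuclideanSpace ℝ (Fin d)) (ρ : ι → ℝ) (hρ : ∀ i, 0 < ρ i)
    (hrep : ∀ i j, G.Adj i j ↔ i ≠ j ∧
      (Metric.sphere (c i) (ρ i) ∩ Metric.sphere (c j) (ρ j)).Nonempty)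
    (htri : G.CliqueFree 3)
    (hdeg : ∀ y, n ≤ G.degree y)
    (hconn : ∀ y : ι, (G.induce {z : ι | z ≠ y ∧ ¬ G.Adj y z}).Connected)
    (v : ι) (hmin : ∀ i, ρ v ≤ ρ i) :
    ¬ ∃ x y z : ι, G.Adj v x ∧ G.Adj v y ∧ G.Adj v z ∧
      Metric.closedBall (c y) (ρ y) ⊆ Metric.ball (c x) (ρ x) ∧
      Metric.closedBall (c z) (ρ z) ⊆ Metric.ball (c y) (ρ y) :=
  stmt10_general G c ρ hrep htri hconn v
end

section
/- For every d ≥ 2 there exists n such that no graph G of minimum degree at least n that is triangle-free and remains connected after deleting any closed neighbourhood N[y] is the intersection graph of spheres in ℝ^d. (Equivalently: for every d there is a finite graph that is not a d-sphere graph.) -/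
/-!
Take a vertex `v` whose sphere `S_v` has minimum radius `r`. By triangle-freeness the spheres
of the neighbours of `v` are pairwise disjoint, so any two of them bound either disjoint or nested
balls. If one neighbour's sphere lies inside another's ball `B_u`, then connectivity of
`G - N[u]` pushes every sphere of `G - N[u]` into `B_u`, since adjacent spheres meet and none of
them meets `S_u`; hence at most one neighbour encloses another. The remaining neighbours have
pairwise disjoint balls of radius `≥ r` meeting `S_v`, and each contains a ball of radius `r`
inside the ball of radius `3r` about the centre of `S_v`: by volume there are at most `3^d` of
them, so `deg v ≤ 3^d + 1`.
-/

open Metric Set Module MeasureTheory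

section Geometry

variable {E : Type*} [NormedAddCommGroup E] [NormedSpace ℝ E]

theorem add_lt_dist_or_dist_lt_abs_sub_of_disjoint_sphere (hE : 1 < Module.rank ℝ E)
    {c₁ c₂ : E} {r₁ r₂ : ℝ} (hr₁ : 0 ≤ r₁) (h : Disjoint (sphere c₁ r₁) (sphere c₂ r₂)) :
    r₁ + r₂ < dist c₁ c₂ ∨ dist c₁ c₂ < |r₁ - r₂| := by
  by_contra! hd
  have : Nontrivial E := rank_pos_iff_nontrivial.mp (zero_lt_one.trans hE)
  obtain ⟨e, he, hce⟩ : ∃ e : E, ‖e‖ = 1 ∧ c₁ - c₂ = dist c₁ c₂ • e := by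
    rw [dist_eq_norm]
    rcases eq_or_ne (c₁ - c₂) 0 with h₀ | h₀
    · obtain ⟨e, he⟩ := exists_norm_eq E zero_le_one
      exact ⟨e, he, by simp [h₀]⟩
    · exact ⟨‖c₁ - c₂‖⁻¹ • (c₁ - c₂), by simp [norm_smul, h₀], by simp [smul_smul, h₀]⟩
  set D := dist c₁ c₂
  have hdist : ∀ t : ℝ, dist (c₁ + t • e) c₂ = |D + t| := by
    intro t
    rw [dist_eq_norm, add_sub_right_comm, hce, ← add_smul, norm_smul, he, mul_one,
      Real.norm_eq_abs]
  have hmem : ∀ t, |t| = r₁ → c₁ + t • e ∈ sphere c₁ r₁ := fun t ht => by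
    simp [norm_smul, he, ht]
  -- `dist · c₂` runs from `|D - r₁|` to `D + r₁` on the connected sphere `S(c₁, r₁)`
  obtain ⟨p, hp, hpc⟩ := (isPreconnected_sphere hE c₁ r₁).intermediate_value
    (hmem (-r₁) (by simp [abs_of_nonneg hr₁])) (hmem r₁ (abs_of_nonneg hr₁))
    (continuous_id.dist continuous_const).continuousOn
    (show r₂ ∈ Icc (dist (c₁ + (-r₁) • e) c₂) (dist (c₁ + r₁ • e) c₂) by
      rw [hdist, hdist, ← sub_eq_add_neg, abs_of_nonneg (by positivity : 0 ≤ D + r₁)]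
      have := abs_le.mp hd.2
      exact ⟨abs_sub_le_iff.mpr ⟨by linarith, by linarith⟩, by linarith⟩)
  exact h.ne_of_mem hp (mem_sphere.mpr hpc) rfl

theorem exists_closedBall_subset_closedBall_dist_eq {c p : E} {ρ r : ℝ} (hp : p ∈ sphere c ρ)
    (hr : 0 ≤ r) (hrρ : r ≤ ρ) : ∃ q, closedBall q r ⊆ closedBall c ρ ∧ dist q p = r := by
  rw [mem_sphere] at hp
  have hρ : 0 ≤ ρ := hr.trans hrρ
  have hcancel : r / ρ * ρ = r := div_mul_cancel_of_imp fun h => le_antisymm (h ▸ hrρ) hr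
  refine ⟨AffineMap.lineMap p c (r / ρ), closedBall_subset_closedBall' ?_, ?_⟩
  · rw [dist_lineMap_right, hp, Real.norm_eq_abs,
      abs_of_nonneg (sub_nonneg.mpr (div_le_one_of_le₀ hrρ hρ)), sub_mul, one_mul, hcancel]
    linarith
  · rw [dist_lineMap_left, hp, Real.norm_eq_abs, abs_of_nonneg (by positivity), hcancel]

variable [FiniteDimensional ℝ E] {ι : Type*}

theorem Finset.card_mul_pow_le_of_pairwiseDisjoint_closedBall {T : Finset ι} {q : ι → E} {c : E}
    {r R : ℝ} (hr : 0 < r) (hR : 0 ≤ R)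
    (hT : (T : Set ι).PairwiseDisjoint fun i => closedBall (q i) r)
    (hsub : ∀ i ∈ T, closedBall (q i) r ⊆ closedBall c R) :
    (T.card : ℝ) * r ^ finrank ℝ E ≤ R ^ finrank ℝ E := by
  borelize E
  set μ : Measure E := Measure.addHaar
  have key : (T.card : ENNReal) * ENNReal.ofReal (r ^ finrank ℝ E) * μ (ball 0 1)
      ≤ ENNReal.ofReal (R ^ finrank ℝ E) * μ (ball 0 1) := by
    calc (T.card : ENNReal) * ENNReal.ofReal (r ^ finrank ℝ E) * μ (ball 0 1)
        = ∑ i ∈ T, μ (closedBall (q i) r) := by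
          simp [Measure.addHaar_closedBall μ _ hr.le, mul_assoc]
      _ = μ (⋃ i ∈ T, closedBall (q i) r) :=
          (measure_biUnion_finset hT fun _ _ => measurableSet_closedBall).symm
      _ ≤ μ (closedBall c R) := measure_mono (iUnion₂_subset hsub)
      _ = ENNReal.ofReal (R ^ finrank ℝ E) * μ (ball 0 1) := Measure.addHaar_closedBall μ _ hR
  rwa [ENNReal.mul_le_mul_iff_left (measure_ball_pos μ _ one_pos).ne' measure_ball_lt_top.ne,
    ← ENNReal.ofReal_natCast, ← ENNReal.ofReal_mul (by positivity),
    ENNReal.ofReal_le_ofReal_iff (by positivity)] at key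

theorem Finset.card_le_three_pow_of_pairwiseDisjoint_closedBall {T : Finset ι} {c : ι → E}
    {ρ : ι → ℝ} {c₀ : E} {r : ℝ} (hr : 0 < r) (hρ : ∀ i ∈ T, r ≤ ρ i)
    (hT : (T : Set ι).PairwiseDisjoint fun i => closedBall (c i) (ρ i))
    (hmeet : ∀ i ∈ T, (sphere c₀ r ∩ sphere (c i) (ρ i)).Nonempty) :
    T.card ≤ 3 ^ finrank ℝ E := by
  have hq : ∀ i ∈ T, ∃ q, closedBall q r ⊆ closedBall (c i) (ρ i) ∧ dist q c₀ ≤ 2 * r := by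
    intro i hi
    obtain ⟨p, hp₀, hp⟩ := hmeet i hi
    obtain ⟨q, hqc, hqp⟩ := exists_closedBall_subset_closedBall_dist_eq hp hr.le (hρ i hi)
    exact ⟨q, hqc, by linarith [dist_triangle q p c₀, mem_sphere.mp hp₀]⟩
  choose! q hqc hqc₀ using hq
  have key := card_mul_pow_le_of_pairwiseDisjoint_closedBall hr (by positivity : 0 ≤ 3 * r)
    (hT.mono_on hqc) fun i hi => closedBall_subset_closedBall' (by linarith [hqc₀ i hi])
  rw [mul_pow] at key
  exact_mod_cast le_of_mul_le_mul_right key (by positivity)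

end Geometry

structure SphereRepresentation {ι : Type*} (G : SimpleGraph ι) (E : Type*)
    [NormedAddCommGroup E] where
  center : ι → E
  radius : ι → ℝ
  radius_pos : ∀ i, 0 < radius i
  adj_iff : ∀ i j, G.Adj i j ↔
    i ≠ j ∧ (sphere (center i) (radius i) ∩ sphere (center j) (radius j)).Nonempty

namespace SphereRepresentation

variable {E : Type*} [NormedAddCommGroup E] {ι : Type*} {G : SimpleGraph ι}
  (R : SphereRepresentation G E) {x y z w : ι}

/-- The closed ball of `x` lies in the open ball of `w`. -/
def Inside (x w : ι) : Prop :=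
  dist (R.center x) (R.center w) < R.radius w - R.radius x

def Encloses (A : Set ι) (x : ι) : Prop :=
  ∃ z ∈ A, z ≠ x ∧ R.Inside z x

variable {R}

theorem Inside.not_inside (h : R.Inside x w) : ¬R.Inside w x := by
  unfold Inside at *
  rw [dist_comm]
  linarith [dist_nonneg (x := R.center x) (y := R.center w)]

variable [NormedSpace ℝ E]

variable (R) in
theorem add_lt_dist_or_inside_or_inside (hE : 1 < Module.rank ℝ E) (hxy : x ≠ y)
    (h : ¬G.Adj x y) :
    R.radius x + R.radius y < dist (R.center x) (R.center y) ∨ R.Inside x y ∨ R.Inside y x := by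
  have hdisj : Disjoint (sphere (R.center x) (R.radius x)) (sphere (R.center y) (R.radius y)) :=
    Set.disjoint_iff_inter_eq_empty.mpr <|
      Set.not_nonempty_iff_eq_empty.mp fun hne => h ((R.adj_iff x y).mpr ⟨hxy, hne⟩)
  unfold Inside
  rw [dist_comm (R.center y)]
  rcases add_lt_dist_or_dist_lt_abs_sub_of_disjoint_sphere hE (R.radius_pos x).le hdisj with h | h
  · exact Or.inl h
  · rcases lt_abs.mp h with h | h
    · exact Or.inr (Or.inr h)
    · exact Or.inr (Or.inl (by linarith))

theorem Inside.of_adj (hE : 1 < Module.rank ℝ E) (hx : R.Inside x w) (hxy : G.Adj x y)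
    (hyw : y ≠ w) (hy : ¬G.Adj w y) : R.Inside y w := by
  obtain ⟨p, hpx, hpy⟩ := ((R.adj_iff x y).mp hxy).2
  rw [mem_sphere] at hpx hpy
  unfold Inside at hx ⊢
  have hpw : dist p (R.center w) < R.radius w := by
    linarith [dist_triangle p (R.center x) (R.center w)]
  -- the common point of `S_x` and `S_y` lies in `B_w`, which rules out the other two cases
  rcases R.add_lt_dist_or_inside_or_inside hE hyw.symm hy with h | h | h
  · linarith [dist_triangle (R.center w) p (R.center y), dist_comm p (R.center w)]
  · unfold Inside at h
    linarith [dist_triangle p (R.center w) (R.center y)]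
  · exact h

theorem Inside.of_connected (hE : 1 < Module.rank ℝ E)
    (hconn : (G.induce {z | z ≠ w ∧ ¬G.Adj w z}).Connected) (hz : z ≠ w ∧ ¬G.Adj w z)
    (hx : x ≠ w ∧ ¬G.Adj w x) (h : R.Inside z w) : R.Inside x w := by
  suffices key : ∀ a b : {z | z ≠ w ∧ ¬G.Adj w z},
      Relation.ReflTransGen (G.induce _).Adj a b → R.Inside a w → R.Inside b w from
    key ⟨z, hz⟩ ⟨x, hx⟩ ((SimpleGraph.reachable_iff_reflTransGen _ _).mp
      (hconn.preconnected _ _)) h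
  intro a b hab ha
  induction hab with
  | refl => exact ha
  | @tail b c _ hbc ih => exact ih.of_adj hE hbc c.2.1 c.2.2

variable {A : Set ι}

variable (R) in
theorem pairwiseDisjoint_closedBall_of_not_encloses (hE : 1 < Module.rank ℝ E)
    (hA : G.IsIndepSet A) :
    {x ∈ A | ¬R.Encloses A x}.PairwiseDisjoint fun x => closedBall (R.center x) (R.radius x) := by
  rintro x ⟨hxA, hx⟩ y ⟨hyA, hy⟩ hxy
  rcases R.add_lt_dist_or_inside_or_inside hE hxy (hA hxA hyA hxy) with h | h | h
  · exact closedBall_disjoint_closedBall h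
  · exact absurd ⟨x, hxA, hxy, h⟩ hy
  · exact absurd ⟨y, hyA, hxy.symm, h⟩ hx

variable (R) in
theorem subsingleton_encloses (hE : 1 < Module.rank ℝ E)
    (hconn : ∀ w, (G.induce {z | z ≠ w ∧ ¬G.Adj w z}).Connected) (hA : G.IsIndepSet A) :
    {x ∈ A | R.Encloses A x}.Subsingleton := by
  rintro u ⟨huA, z, hzA, hzu, hz⟩ u' ⟨hu'A, z', hz'A, hz'u', hz'⟩
  by_contra hne
  have h : R.Inside u' u := hz.of_connected hE (hconn u) ⟨hzu, hA huA hzA (Ne.symm hzu)⟩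
    ⟨Ne.symm hne, hA huA hu'A hne⟩
  have h' : R.Inside u u' := hz'.of_connected hE (hconn u') ⟨hz'u', hA hu'A hz'A (Ne.symm hz'u')⟩
    ⟨hne, hA hu'A huA (Ne.symm hne)⟩
  exact h.not_inside h'

variable (R) in
theorem degree_le_three_pow_add_one [FiniteDimensional ℝ E] [Fintype ι] [DecidableRel G.Adj]
    (hE : 1 < Module.rank ℝ E) (hconn : ∀ w, (G.induce {z | z ≠ w ∧ ¬G.Adj w z}).Connected)
    (htf : G.CliqueFree 3) {v : ι} (hv : ∀ i, R.radius v ≤ R.radius i) :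
    G.degree v ≤ 3 ^ finrank ℝ E + 1 := by
  classical
  set A := G.neighborFinset v
  have hA : G.IsIndepSet (A : Set ι) := by
    rw [SimpleGraph.coe_neighborFinset]
    exact SimpleGraph.isIndepSet_neighborSet_of_triangleFree G htf v
  have hout : (A.filter (R.Encloses A)).card ≤ 1 := Finset.card_le_one.mpr fun a ha b hb =>
    R.subsingleton_encloses hE hconn hA (by simpa using ha) (by simpa using hb)
  have hin : (A.filter fun x => ¬R.Encloses A x).card ≤ 3 ^ finrank ℝ E := by
    refine Finset.card_le_three_pow_of_pairwiseDisjoint_closedBall (R.radius_pos v)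
      (fun i _ => hv i) ?_ fun i hi => ((R.adj_iff v i).mp ?_).2
    · rw [Finset.coe_filter]
      exact R.pairwiseDisjoint_closedBall_of_not_encloses hE hA
    · exact (G.mem_neighborFinset v i).mp (Finset.mem_filter.mp hi).1
  rw [← G.card_neighborFinset_eq_degree, ← A.card_filter_add_card_filter_not (R.Encloses A)]
  omega

end SphereRepresentation

/-- For every `d ≥ 2` there exists `n` such that no finite (nonempty) triangle-free graph
of minimum degree at least `n` that remains connected after deleting any closed
neighbourhood `N[y]` is the intersection graph of spheres in `ℝ^d`.  Equivalently, for
every `d` there is a finite graph that is not a `d`-sphere graph. -/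
theorem stmt11 (d : ℕ) (hd : 2 ≤ d) :
    ∃ n : ℕ, ∀ (ι : Type) [Fintype ι] [Nonempty ι]
      (G : SimpleGraph ι) [DecidableRel G.Adj],
      (∀ y, n ≤ G.degree y) →
      G.CliqueFree 3 →
      (∀ y : ι, (G.induce {z : ι | z ≠ y ∧ ¬ G.Adj y z}).Connected) →
      ¬ ∃ (c : ι → EuclideanSpace ℝ (Fin d)) (ρ : ι → ℝ),
        (∀ i, 0 < ρ i) ∧
        ∀ i j, G.Adj i j ↔ i ≠ j ∧
          (Metric.sphere (c i) (ρ i) ∩ Metric.sphere (c j) (ρ j)).Nonempty := by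
  refine ⟨3 ^ d + 2, fun ι _ _ G _ hdeg htf hconn ⟨c, ρ, hρ, hadj⟩ => ?_⟩
  let R : SphereRepresentation G (EuclideanSpace ℝ (Fin d)) := ⟨c, ρ, hρ, hadj⟩
  have hE : 1 < Module.rank ℝ (EuclideanSpace ℝ (Fin d)) := by
    rw [← finrank_eq_rank, finrank_euclideanSpace_fin]
    exact_mod_cast hd
  obtain ⟨v, -, hv⟩ := Finset.exists_min_image Finset.univ ρ Finset.univ_nonempty
  have hdeg_le := R.degree_le_three_pow_add_one hE hconn htf fun i => hv i (Finset.mem_univ i)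
  rw [finrank_euclideanSpace_fin] at hdeg_le
  linarith [hdeg v]
end
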